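/- arXiv:1407.2967 — 2 statements merged into one kernel-verified Lean document; each statement's English description precedes it below -/
import Mathlib

section
/- The function u_ε(x) = (ε² + |x|²)/ε on ℝ² satisfies, up to a positive constant multiplier, the integral equation u(x) = ∫_{ℝ²} |x−y|² u(y)^{−3} dy. More precisely, there exists a constant c > 0 such that for all x ∈ ℝ², ∫_{ℝ²} |x−y|² u_ε(y)^{−3} dy = c · u_ε(x). -/
/-!
Write `u_ε(y)^{-3} = ε³ w(y)` with `w(y) = (ε² + ‖y‖²)⁻³`. Expanding
`‖x - y‖² = ‖x‖² - 2⟪x, y⟫ + ‖y‖²`, the cross term integrates to zero because `w` is even,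
so the integral is `ε³ (‖x‖² ∫ w + ∫ ‖y‖² w)`. In polar coordinates both moments reduce to
`∫₀^∞ r (a + r²)^{-(n+1)} dr = 1 / (2 n aⁿ)`, giving `∫ w = π / (2ε⁴)` and
`∫ ‖y‖² w = π / (2ε²)`, hence `c = π / 2`.
-/

open MeasureTheory Real Filter Set Topology Module
open scoped RealInnerProductSpace

section RadialPrimitive

variable {a : ℝ} {n : ℕ}

lemma hasDerivAt_inv_add_sq_pow (ha : 0 < a) (hn : n ≠ 0) (r : ℝ) :
    HasDerivAt (fun r : ℝ => -(2 * n * (a + r ^ 2) ^ n)⁻¹) (r * ((a + r ^ 2) ^ (n + 1))⁻¹) r := by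
  have hpos : 0 < a + r ^ 2 := by positivity
  have h := (((hasDerivAt_pow 2 r).const_add a).pow n).const_mul (2 * n : ℝ)
  have hne : 2 * n * (a + r ^ 2) ^ n ≠ 0 := by positivity
  refine (h.inv hne).neg.congr_deriv ?_
  obtain ⟨m, rfl⟩ := Nat.exists_eq_add_one_of_ne_zero hn
  simp only [Pi.pow_apply, Nat.add_sub_cancel]
  field_simp
  ring

lemma tendsto_inv_add_sq_pow_atTop (hn : n ≠ 0) :
    Tendsto (fun r : ℝ => -(2 * n * (a + r ^ 2) ^ n)⁻¹) atTop (𝓝 0) := by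
  have h : Tendsto (fun r : ℝ => a + r ^ 2) atTop atTop :=
    tendsto_atTop_add_const_left _ _ (tendsto_pow_atTop two_ne_zero)
  simpa using (((tendsto_pow_atTop hn).comp h).const_mul_atTop
    (by positivity : (0 : ℝ) < 2 * n)).inv_tendsto_atTop.neg

lemma integrableOn_Ioi_mul_inv_add_sq_pow (ha : 0 < a) (hn : n ≠ 0) :
    IntegrableOn (fun r : ℝ => r * ((a + r ^ 2) ^ (n + 1))⁻¹) (Ioi 0) :=
  integrableOn_Ioi_deriv_of_nonneg' (fun r _ => hasDerivAt_inv_add_sq_pow ha hn r)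
    (fun r (hr : 0 < r) => by positivity) (tendsto_inv_add_sq_pow_atTop hn)

lemma integral_Ioi_mul_inv_add_sq_pow (ha : 0 < a) (hn : n ≠ 0) :
    ∫ r in Ioi (0 : ℝ), r * ((a + r ^ 2) ^ (n + 1))⁻¹ = (2 * n * a ^ n)⁻¹ := by
  rw [integral_Ioi_of_hasDerivAt_of_nonneg' (fun r _ => hasDerivAt_inv_add_sq_pow ha hn r)
    (fun r (hr : 0 < r) => by positivity) (tendsto_inv_add_sq_pow_atTop hn)]
  simp

/-- Exponents written as `n + 1` so that `integral_Ioi_mul_inv_add_sq_pow` applies termwise. -/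
lemma mul_sq_mul_inv_add_sq_cube (ha : 0 < a) (r : ℝ) :
    r * (r ^ 2 * ((a + r ^ 2) ^ 3)⁻¹) =
      r * ((a + r ^ 2) ^ (1 + 1))⁻¹ - a * (r * ((a + r ^ 2) ^ (2 + 1))⁻¹) := by
  have : a + r ^ 2 ≠ 0 := by positivity
  field_simp
  ring

end RadialPrimitive

section SecondMoment

variable {E : Type*} [NormedAddCommGroup E] [MeasurableSpace E] {μ : Measure E} {g : E → ℝ}

lemma integrable_norm_sub_sq_mul [OpensMeasurableSpace E] (hg : Integrable g μ)
    (hg₂ : Integrable (fun y => ‖y‖ ^ 2 * g y) μ) (x : E) :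
    Integrable (fun y => ‖x - y‖ ^ 2 * g y) μ := by
  refine ((hg.norm.const_mul (2 * ‖x‖ ^ 2)).add (hg₂.norm.const_mul 2)).mono'
    (((continuous_const.sub continuous_id).norm.pow 2).aestronglyMeasurable.mul hg.1) ?_
  filter_upwards with y
  have hxy : ‖x - y‖ ^ 2 ≤ 2 * ‖x‖ ^ 2 + 2 * ‖y‖ ^ 2 := by
    nlinarith [norm_sub_le x y, norm_nonneg (x - y), sq_nonneg (‖x‖ - ‖y‖)]
  simp only [Pi.add_apply, norm_mul, norm_pow, norm_norm]
  nlinarith [norm_nonneg (g y)]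

lemma integral_inner_mul_eq_zero_of_even [InnerProductSpace ℝ E] [MeasurableNeg E]
    [μ.IsNegInvariant] (hg : ∀ y, g (-y) = g y) (x : E) :
    ∫ y, ⟪x, y⟫ * g y ∂μ = 0 := by
  have h := integral_neg_eq_self (fun y => ⟪x, y⟫ * g y) μ
  simp only [inner_neg_right, hg, neg_mul, integral_neg] at h
  linarith

lemma integral_norm_sub_sq_mul_of_even [InnerProductSpace ℝ E] [OpensMeasurableSpace E]
    [MeasurableNeg E] [μ.IsNegInvariant] (hg_even : ∀ y, g (-y) = g y) (hg : Integrable g μ)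
    (hg₂ : Integrable (fun y => ‖y‖ ^ 2 * g y) μ) (x : E) :
    ∫ y, ‖x - y‖ ^ 2 * g y ∂μ = ‖x‖ ^ 2 * ∫ y, g y ∂μ + ∫ y, ‖y‖ ^ 2 * g y ∂μ := by
  have hsplit : ∀ y,
      ‖x - y‖ ^ 2 * g y = (‖x‖ ^ 2 * g y + ‖y‖ ^ 2 * g y) - 2 * (⟪x, y⟫ * g y) :=
    fun y => by rw [norm_sub_sq_real]; ring
  have hsum : Integrable (fun y => ‖x‖ ^ 2 * g y + ‖y‖ ^ 2 * g y) μ := (hg.const_mul _).add hg₂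
  have hcross : Integrable (fun y => ⟪x, y⟫ * g y) μ := by
    refine ((hsum.sub (integrable_norm_sub_sq_mul hg hg₂ x)).div_const 2).congr
      (ae_of_all _ fun y => ?_)
    simp only [Pi.sub_apply, hsplit y]
    ring
  rw [integral_congr_ae (ae_of_all _ hsplit), integral_sub hsum (hcross.const_mul 2),
    integral_add (hg.const_mul _) hg₂, integral_const_mul, integral_const_mul,
    integral_inner_mul_eq_zero_of_even hg_even]
  ring

end SecondMoment

section PlanarRadial

variable {E : Type*} [NormedAddCommGroup E] [MeasurableSpace E] [BorelSpace E]

lemma integrable_fun_norm_of_finrank_eq_two [NormedSpace ℝ E] [FiniteDimensional ℝ E]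
    (μ : Measure E) [μ.IsAddHaarMeasure] (hE : finrank ℝ E = 2) {f : ℝ → ℝ} :
    Integrable (fun x => f ‖x‖) μ ↔ IntegrableOn (fun r => r * f r) (Ioi 0) := by
  have : Nontrivial E := Module.nontrivial_of_finrank_pos (R := ℝ) (by omega)
  rw [integrable_fun_norm_addHaar μ, hE]
  simp only [Nat.add_one_sub_one, pow_one, smul_eq_mul]

lemma integral_fun_norm_of_finrank_eq_two [InnerProductSpace ℝ E] [FiniteDimensional ℝ E]
    (hE : finrank ℝ E = 2) (f : ℝ → ℝ) :
    ∫ x : E, f ‖x‖ = 2 * π * ∫ r in Ioi (0 : ℝ), r * f r := by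
  have : Nontrivial E := Module.nontrivial_of_finrank_pos (R := ℝ) (by omega)
  rw [integral_fun_norm_addHaar volume, measureReal_def,
    InnerProductSpace.volume_ball_of_dim_even (k := 1) hE, hE]
  simp only [ENNReal.ofReal_one, one_pow, pow_one, Nat.factorial_one, Nat.cast_one, div_one,
    one_mul, pi_nonneg, ENNReal.toReal_ofReal, Nat.add_one_sub_one, smul_eq_mul, nsmul_eq_mul,
    Nat.cast_ofNat]
  ring

end PlanarRadial

section PlanarWeight

variable {E : Type*} [NormedAddCommGroup E] [MeasurableSpace E] [BorelSpace E] {a : ℝ}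

lemma integrable_inv_add_norm_sq_cube [NormedSpace ℝ E] [FiniteDimensional ℝ E]
    (μ : Measure E) [μ.IsAddHaarMeasure] (hE : finrank ℝ E = 2) (ha : 0 < a) :
    Integrable (fun x => ((a + ‖x‖ ^ 2) ^ 3)⁻¹) μ :=
  (integrable_fun_norm_of_finrank_eq_two μ hE).2
    (integrableOn_Ioi_mul_inv_add_sq_pow ha two_ne_zero)

lemma integrable_norm_sq_mul_inv_add_norm_sq_cube [NormedSpace ℝ E] [FiniteDimensional ℝ E]
    (μ : Measure E) [μ.IsAddHaarMeasure] (hE : finrank ℝ E = 2) (ha : 0 < a) :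
    Integrable (fun x => ‖x‖ ^ 2 * ((a + ‖x‖ ^ 2) ^ 3)⁻¹) μ := by
  refine (integrable_fun_norm_of_finrank_eq_two μ hE
    (f := fun r => r ^ 2 * ((a + r ^ 2) ^ 3)⁻¹)).2 ?_
  simp_rw [mul_sq_mul_inv_add_sq_cube ha]
  exact (integrableOn_Ioi_mul_inv_add_sq_pow ha one_ne_zero).sub
    ((integrableOn_Ioi_mul_inv_add_sq_pow ha two_ne_zero).const_mul a)

lemma integral_inv_add_norm_sq_cube [InnerProductSpace ℝ E] [FiniteDimensional ℝ E]
    (hE : finrank ℝ E = 2) (ha : 0 < a) :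
    ∫ x : E, ((a + ‖x‖ ^ 2) ^ 3)⁻¹ = π / (2 * a ^ 2) := by
  rw [integral_fun_norm_of_finrank_eq_two hE (fun r => ((a + r ^ 2) ^ 3)⁻¹),
    integral_Ioi_mul_inv_add_sq_pow ha two_ne_zero]
  field_simp
  norm_num

lemma integral_norm_sq_mul_inv_add_norm_sq_cube [InnerProductSpace ℝ E] [FiniteDimensional ℝ E]
    (hE : finrank ℝ E = 2) (ha : 0 < a) :
    ∫ x : E, ‖x‖ ^ 2 * ((a + ‖x‖ ^ 2) ^ 3)⁻¹ = π / (2 * a) := by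
  rw [integral_fun_norm_of_finrank_eq_two hE (fun r => r ^ 2 * ((a + r ^ 2) ^ 3)⁻¹)]
  simp_rw [mul_sq_mul_inv_add_sq_cube ha]
  rw [integral_sub (integrableOn_Ioi_mul_inv_add_sq_pow ha one_ne_zero)
      ((integrableOn_Ioi_mul_inv_add_sq_pow ha two_ne_zero).const_mul a),
    integral_const_mul, integral_Ioi_mul_inv_add_sq_pow ha one_ne_zero,
    integral_Ioi_mul_inv_add_sq_pow ha two_ne_zero]
  field_simp
  norm_num

end PlanarWeight

theorem stmt0 (ε : ℝ) (hε : 0 < ε) :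
    ∃ c : ℝ, 0 < c ∧ ∀ x : EuclideanSpace ℝ (Fin 2),
      Integrable (fun y : EuclideanSpace ℝ (Fin 2) =>
        ‖x - y‖ ^ 2 * ((ε ^ 2 + ‖y‖ ^ 2) / ε) ^ (-3 : ℤ)) ∧
      ∫ y : EuclideanSpace ℝ (Fin 2),
          ‖x - y‖ ^ 2 * ((ε ^ 2 + ‖y‖ ^ 2) / ε) ^ (-3 : ℤ)
        = c * ((ε ^ 2 + ‖x‖ ^ 2) / ε) := by
  have hE : finrank ℝ (EuclideanSpace ℝ (Fin 2)) = 2 := finrank_euclideanSpace_fin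
  have ha : 0 < ε ^ 2 := by positivity
  have hu : ∀ y : EuclideanSpace ℝ (Fin 2),
      ((ε ^ 2 + ‖y‖ ^ 2) / ε) ^ (-3 : ℤ) = ε ^ 3 * ((ε ^ 2 + ‖y‖ ^ 2) ^ 3)⁻¹ := fun y => by
    rw [zpow_neg, zpow_ofNat, div_pow, inv_div, div_eq_mul_inv]
  have hw := integrable_inv_add_norm_sq_cube volume hE ha
  have hw₂ := integrable_norm_sq_mul_inv_add_norm_sq_cube volume hE ha
  refine ⟨π / 2, by positivity, fun x => ?_⟩
  simp_rw [hu, mul_left_comm _ (ε ^ 3)]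
  refine ⟨(integrable_norm_sub_sq_mul hw hw₂ x).const_mul _, ?_⟩
  rw [integral_const_mul, integral_norm_sub_sq_mul_of_even (fun y => by rw [norm_neg]) hw hw₂ x,
    integral_inv_add_norm_sq_cube hE ha, integral_norm_sq_mul_inv_add_norm_sq_cube hE ha]
  field_simp
  ring
end

section
/- Uniform lower bound for the potential: let α > n, R continuous and positive on 𝕊ⁿ, and δ₀ > 0. Suppose f ≥ 0 is integrable on 𝕊ⁿ with ∫_{B_{δ₀}(N)} f ≥ 1/100 and ∫_{B_{δ₀}(S)} f ≥ 1/100, where N and S are the north and south poles and B_{δ₀} denotes the geodesic ball of radius δ₀. Then there is a constant C₄ > 0, depending only on n, α, δ₀ and min R, such that ∫_{𝕊ⁿ} R(η) f(η) |ξ−η|^{α−n} dη ≥ C₄ for every ξ ∈ 𝕊ⁿ (provided δ₀ is small enough that B_{δ₀}(N) and B_{δ₀}(S) are antipodally separated). -/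
open MeasureTheory Real
open scoped RealInnerProductSpace

lemma aux_geom {E : Type*} [NormedAddCommGroup E] [InnerProductSpace ℝ E]
    {δ₀ : ℝ} (hδ₀ : 0 < δ₀) (hδ₀' : δ₀ < π / 2)
    {p ξ η : E} (hp : ‖p‖ = 1) (hξ : ‖ξ‖ = 1) (hη : ‖η‖ = 1)
    (hpξ : ⟪p, ξ⟫ ≤ 0) (hpη : Real.cos δ₀ < ⟪p, η⟫) :
    Real.sqrt (2 - 2 * Real.sin δ₀) ≤ ‖ξ - η‖ := by
  have hcospos : 0 < Real.cos δ₀ := Real.cos_pos_of_mem_Ioo ⟨by linarith [Real.pi_pos], hδ₀'⟩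
  set c : ℝ := ⟪p, η⟫ with hc
  have hc0 : 0 < c := lt_trans hcospos hpη
  set v : E := η - c • p with hv
  have hvsq : ‖v‖ ^ 2 = 1 - c ^ 2 := by
    rw [hv, norm_sub_sq_real, inner_smul_right, norm_smul, real_inner_comm p η, ← hc]
    rw [hη, hp]
    rw [Real.norm_eq_abs, abs_of_pos hc0]
    ring
  have hsin0 : 0 ≤ Real.sin δ₀ := Real.sin_nonneg_of_nonneg_of_le_pi hδ₀.le (by linarith [Real.pi_pos])
  have hvle : ‖v‖ ≤ Real.sin δ₀ := by
    have h1 : ‖v‖ ^ 2 ≤ Real.sin δ₀ ^ 2 := by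
      have := Real.sin_sq_add_cos_sq δ₀
      nlinarith [hpη, hcospos]
    calc ‖v‖ = Real.sqrt (‖v‖ ^ 2) := by rw [Real.sqrt_sq (norm_nonneg v)]
      _ ≤ Real.sqrt (Real.sin δ₀ ^ 2) := Real.sqrt_le_sqrt h1
      _ = Real.sin δ₀ := Real.sqrt_sq hsin0
  have hinner : ⟪ξ, η⟫ ≤ Real.sin δ₀ := by
    have hdecomp : ⟪ξ, η⟫ = c * ⟪p, ξ⟫ + ⟪ξ, v⟫ := by
      rw [hv, inner_sub_right, inner_smul_right, real_inner_comm ξ p]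
      ring
    have h2 : ⟪ξ, v⟫ ≤ ‖v‖ := by
      calc ⟪ξ, v⟫ ≤ ‖ξ‖ * ‖v‖ := real_inner_le_norm ξ v
        _ = ‖v‖ := by rw [hξ, one_mul]
    nlinarith [mul_nonpos_of_nonneg_of_nonpos hc0.le hpξ]
  have hnsq : 2 - 2 * Real.sin δ₀ ≤ ‖ξ - η‖ ^ 2 := by
    rw [norm_sub_sq_real, hξ, hη]
    nlinarith
  calc Real.sqrt (2 - 2 * Real.sin δ₀) ≤ Real.sqrt (‖ξ - η‖ ^ 2) := Real.sqrt_le_sqrt hnsq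
    _ = ‖ξ - η‖ := Real.sqrt_sq (norm_nonneg _)


/-- Uniform positive lower bound for the potential `ξ ↦ ∫ R(η) f(η)|ξ−η|^{α−n} dη`
when `f` has mass at least `1/100` in small geodesic balls around both the north
and the south pole. -/
theorem stmt10 (n : ℕ) (hn : 1 ≤ n) (α : ℝ) (hα : (n : ℝ) < α)
    (R : EuclideanSpace ℝ (Fin (n + 1)) → ℝ)
    (hR : ContinuousOn R (Metric.sphere (0 : EuclideanSpace ℝ (Fin (n + 1))) 1))
    (hRpos : ∀ ξ ∈ Metric.sphere (0 : EuclideanSpace ℝ (Fin (n + 1))) 1, 0 < R ξ)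
    (δ₀ : ℝ) (hδ₀ : 0 < δ₀) (hδ₀' : δ₀ < π / 2) :
    ∃ C₄ : ℝ, 0 < C₄ ∧
      ∀ f : EuclideanSpace ℝ (Fin (n + 1)) → ℝ, Measurable f → (∀ ξ, 0 ≤ f ξ) →
        Integrable f ((μH[(n : ℝ)]).restrict
          (Metric.sphere (0 : EuclideanSpace ℝ (Fin (n + 1))) 1)) →
        (1 / 100 : ℝ) ≤ (∫ η in {η : EuclideanSpace ℝ (Fin (n + 1)) |
            η ∈ Metric.sphere (0 : EuclideanSpace ℝ (Fin (n + 1))) 1 ∧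
            Real.arccos ⟪EuclideanSpace.single (Fin.last n) (1 : ℝ), η⟫ < δ₀},
          f η ∂μH[(n : ℝ)]) →
        (1 / 100 : ℝ) ≤ (∫ η in {η : EuclideanSpace ℝ (Fin (n + 1)) |
            η ∈ Metric.sphere (0 : EuclideanSpace ℝ (Fin (n + 1))) 1 ∧
            Real.arccos ⟪-EuclideanSpace.single (Fin.last n) (1 : ℝ), η⟫ < δ₀},
          f η ∂μH[(n : ℝ)]) →
        ∀ ξ ∈ Metric.sphere (0 : EuclideanSpace ℝ (Fin (n + 1))) 1,
          C₄ ≤ ∫ η in Metric.sphere (0 : EuclideanSpace ℝ (Fin (n + 1))) 1,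
            R η * f η * ‖ξ - η‖ ^ (α - n) ∂μH[(n : ℝ)] := by
  classical
  set μ : Measure (EuclideanSpace ℝ (Fin (n + 1))) := μH[(n : ℝ)] with hμ
  set Sph : Set (EuclideanSpace ℝ (Fin (n + 1))) := Metric.sphere (0 : EuclideanSpace ℝ (Fin (n + 1))) 1 with hSph
  have hSmeas : MeasurableSet Sph := Metric.isClosed_sphere.measurableSet
  set N : EuclideanSpace ℝ (Fin (n + 1)) := EuclideanSpace.single (Fin.last n) (1 : ℝ) with hN
  have hNnorm : ‖N‖ = 1 := by
    rw [hN, EuclideanSpace.norm_single]; norm_num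
  have hNS : N ∈ Sph := by
    simp [hSph, mem_sphere_iff_norm, hNnorm]
  -- min and max of R on the sphere
  obtain ⟨x₀, hx₀S, hx₀'⟩ := (isCompact_sphere (0 : EuclideanSpace ℝ (Fin (n + 1))) 1).exists_isMinOn ⟨N, hNS⟩ hR
  have hx₀ : ∀ y ∈ Sph, R x₀ ≤ R y := fun y hy => isMinOn_iff.mp hx₀' y hy
  obtain ⟨x₁, hx₁S, hx₁'⟩ := (isCompact_sphere (0 : EuclideanSpace ℝ (Fin (n + 1))) 1).exists_isMaxOn ⟨N, hNS⟩ hR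
  have hx₁ : ∀ y ∈ Sph, R y ≤ R x₁ := fun y hy => isMaxOn_iff.mp hx₁' y hy
  have hm0 : 0 < R x₀ := hRpos x₀ hx₀S
  -- chordal separation constant
  have hsinlt : Real.sin δ₀ < 1 := by
    calc Real.sin δ₀ < Real.sin (π / 2) := by
          apply Real.sin_lt_sin_of_lt_of_le_pi_div_two (by linarith [Real.pi_pos]) le_rfl hδ₀'
      _ = 1 := Real.sin_pi_div_two
  set c : ℝ := Real.sqrt (2 - 2 * Real.sin δ₀) with hcdef
  have hc0 : 0 < c := Real.sqrt_pos.2 (by linarith)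
  have hαn : (0 : ℝ) ≤ α - n := by linarith
  refine ⟨R x₀ * c ^ (α - (n : ℝ)) * (1 / 100), by positivity, ?_⟩
  intro f hfm hfnn hfi hmassN hmassS ξ hξS
  have hξnorm : ‖ξ‖ = 1 := by simpa [hSph, mem_sphere_iff_norm] using hξS
  -- the integrand and its integrability on the sphere
  set g : EuclideanSpace ℝ (Fin (n + 1)) → ℝ := fun η => R η * f η * ‖ξ - η‖ ^ (α - (n : ℝ)) with hg
  have hkcont : Continuous fun η : EuclideanSpace ℝ (Fin (n + 1)) => ‖ξ - η‖ ^ (α - (n : ℝ)) :=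
    (continuous_const.sub continuous_id).norm.rpow_const (fun x => Or.inr hαn)
  have hgm : AEStronglyMeasurable g (μ.restrict Sph) := by
    exact ((hR.aestronglyMeasurable hSmeas).mul
      (hfm.aestronglyMeasurable.restrict)).mul (hkcont.aestronglyMeasurable.restrict)
  have hgi : IntegrableOn g Sph μ := by
    apply Integrable.mono' (g := fun η => (R x₁ * 2 ^ (α - (n : ℝ))) * f η)
      (hfi.const_mul _) hgm
    rw [ae_restrict_iff' hSmeas]
    refine ae_of_all _ fun η hη => ?_
    have hηnorm : ‖η‖ = 1 := by simpa [hSph, mem_sphere_iff_norm] using hη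
    have hRη : 0 < R η := hRpos η hη
    have hd : ‖ξ - η‖ ^ (α - (n : ℝ)) ≤ 2 ^ (α - (n : ℝ)) := by
      apply Real.rpow_le_rpow (norm_nonneg _) _ hαn
      calc ‖ξ - η‖ ≤ ‖ξ‖ + ‖η‖ := norm_sub_le _ _
        _ = 2 := by rw [hξnorm, hηnorm]; norm_num
    have hd0 : (0 : ℝ) ≤ ‖ξ - η‖ ^ (α - (n : ℝ)) := Real.rpow_nonneg (norm_nonneg _) _
    have hb : g η = R η * f η * ‖ξ - η‖ ^ (α - (n : ℝ)) := rfl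
    have hR1 : R η ≤ R x₁ := hx₁ η hη
    have hx₁0 : (0 : ℝ) ≤ R x₁ := hRη.le.trans hR1
    rw [Real.norm_eq_abs, hb, abs_of_nonneg (mul_nonneg (mul_nonneg hRη.le (hfnn η)) hd0)]
    calc R η * f η * ‖ξ - η‖ ^ (α - (n : ℝ))
        ≤ R x₁ * f η * ‖ξ - η‖ ^ (α - (n : ℝ)) :=
          mul_le_mul_of_nonneg_right (mul_le_mul_of_nonneg_right hR1 (hfnn η)) hd0
      _ ≤ R x₁ * f η * 2 ^ (α - (n : ℝ)) :=
          mul_le_mul_of_nonneg_left hd (mul_nonneg hx₁0 (hfnn η))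
      _ = R x₁ * 2 ^ (α - (n : ℝ)) * f η := by ring
  have hgnn : 0 ≤ᵐ[μ.restrict Sph] g := by
    rw [Filter.EventuallyLE, ae_restrict_iff' hSmeas]
    refine ae_of_all _ fun η hη => ?_
    have hRη : 0 < R η := hRpos η hη
    have hd0 : (0 : ℝ) ≤ ‖ξ - η‖ ^ (α - (n : ℝ)) := Real.rpow_nonneg (norm_nonneg _) _
    show (0 : ℝ) ≤ R η * f η * ‖ξ - η‖ ^ (α - (n : ℝ))
    exact mul_nonneg (mul_nonneg hRη.le (hfnn η)) hd0
  -- the key step for either pole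
  have key : ∀ p : EuclideanSpace ℝ (Fin (n + 1)), ‖p‖ = 1 → ⟪p, ξ⟫ ≤ 0 →
      (1 / 100 : ℝ) ≤ (∫ η in {η : EuclideanSpace ℝ (Fin (n + 1)) | η ∈ Sph ∧ Real.arccos ⟪p, η⟫ < δ₀}, f η ∂μ) →
      R x₀ * c ^ (α - (n : ℝ)) * (1 / 100) ≤ ∫ η in Sph, g η ∂μ := by
    intro p hpnorm hpξ hmass
    set A : Set (EuclideanSpace ℝ (Fin (n + 1))) := {η : EuclideanSpace ℝ (Fin (n + 1)) | η ∈ Sph ∧ Real.arccos ⟪p, η⟫ < δ₀} with hA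
    have hAsub : A ⊆ Sph := fun η hη => hη.1
    have hAmeas : MeasurableSet A := by
      have h1 : MeasurableSet {η : EuclideanSpace ℝ (Fin (n + 1)) | Real.arccos ⟪p, η⟫ < δ₀} := by
        have hcont : Continuous fun η : EuclideanSpace ℝ (Fin (n + 1)) => Real.arccos ⟪p, η⟫ :=
          Real.continuous_arccos.comp (continuous_const.inner continuous_id)
        exact measurableSet_lt (hcont.measurable) measurable_const
      have : A = Sph ∩ {η : EuclideanSpace ℝ (Fin (n + 1)) | Real.arccos ⟪p, η⟫ < δ₀} := rfl
      rw [this]; exact hSmeas.inter h1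
    -- pointwise distance bound on A
    have hdist : ∀ η ∈ A, c ≤ ‖ξ - η‖ := by
      intro η hη
      have hηnorm : ‖η‖ = 1 := by simpa [hSph, mem_sphere_iff_norm] using hη.1
      have hip : |⟪p, η⟫| ≤ 1 := by
        have := abs_real_inner_le_norm p η
        rwa [hpnorm, hηnorm, one_mul] at this
      have hcos : Real.cos δ₀ < ⟪p, η⟫ := by
        have h1 : Real.cos δ₀ < Real.cos (Real.arccos ⟪p, η⟫) := by
          apply Real.cos_lt_cos_of_nonneg_of_le_pi (Real.arccos_nonneg _)
            (by linarith [Real.pi_pos]) hη.2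
        rwa [Real.cos_arccos (by linarith [abs_le.1 hip]) (by linarith [abs_le.1 hip])] at h1
      exact aux_geom hδ₀ hδ₀' hpnorm hξnorm hηnorm hpξ hcos
    -- pointwise integrand bound on A
    have hptwise : ∀ η ∈ A, R x₀ * c ^ (α - (n : ℝ)) * f η ≤ g η := by
      intro η hη
      have hRη : R x₀ ≤ R η := hx₀ η (hAsub hη)
      have hdη : c ^ (α - (n : ℝ)) ≤ ‖ξ - η‖ ^ (α - (n : ℝ)) :=
        Real.rpow_le_rpow hc0.le (hdist η hη) hαn
      have hcp : (0 : ℝ) < c ^ (α - (n : ℝ)) := Real.rpow_pos_of_pos hc0 _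
      have hfη := hfnn η
      have hRη0 : (0 : ℝ) < R η := lt_of_lt_of_le hm0 hRη
      show R x₀ * c ^ (α - (n : ℝ)) * f η ≤ R η * f η * ‖ξ - η‖ ^ (α - (n : ℝ))
      calc R x₀ * c ^ (α - (n : ℝ)) * f η
          ≤ R η * c ^ (α - (n : ℝ)) * f η :=
            mul_le_mul_of_nonneg_right (mul_le_mul_of_nonneg_right hRη hcp.le) hfη
        _ ≤ R η * ‖ξ - η‖ ^ (α - (n : ℝ)) * f η :=
            mul_le_mul_of_nonneg_right (mul_le_mul_of_nonneg_left hdη hRη0.le) hfη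
        _ = R η * f η * ‖ξ - η‖ ^ (α - (n : ℝ)) := by ring
    have hfiOn : IntegrableOn f Sph μ := hfi
    have hfiA : IntegrableOn f A μ := hfiOn.mono_set hAsub
    have hgiA : IntegrableOn g A μ := hgi.mono_set hAsub
    calc R x₀ * c ^ (α - (n : ℝ)) * (1 / 100)
        ≤ R x₀ * c ^ (α - (n : ℝ)) * ∫ η in A, f η ∂μ := by
          apply mul_le_mul_of_nonneg_left hmass (by positivity)
      _ = ∫ η in A, R x₀ * c ^ (α - (n : ℝ)) * f η ∂μ := (integral_const_mul _ _).symm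
      _ ≤ ∫ η in A, g η ∂μ := setIntegral_mono_on (hfiA.const_mul _) hgiA hAmeas hptwise
      _ ≤ ∫ η in Sph, g η ∂μ := setIntegral_mono_set hgi hgnn (HasSubset.Subset.eventuallyLE hAsub)
  rcases le_total ⟪N, ξ⟫ 0 with h | h
  · exact key N hNnorm h hmassN
  · refine key (-N) (by rw [norm_neg, hNnorm]) ?_ hmassS
    rw [inner_neg_left]; linarith
end
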